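/- Let 1 ≤ i < j ≤ k. If r_{i,j} = 1, then there exists X ∈ h(0,0,C) such that p_{i,j}(X) is the d_i × d_j matrix whose (1, d_j)-entry is 1 and all other entries are 0. If r_{i,j} = 2, then there exists X ∈ h(0,0,C) such that p_{i,j}(X) has (1, d_j − 1)-entry equal to 1, (2, d_j)-entry equal to 1, and all other entries 0 except possibly the (1, d_j)-entry. -/

import Mathlib

open scoped Classical

noncomputable section

namespace Paper

variable {F : Type*}

attribute [local instance] LieRing.ofAssociativeRing

/-- Offset (starting global index) of the `i`-th block. -/
def off {k : ℕ} (dv : Fin k → ℕ) (i : Fin k) : ℕ := ∑ t ∈ Finset.Iio i, dv t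

/-- Total size `d = d₁ + ⋯ + d_k`. -/
def dtot {k : ℕ} (dv : Fin k → ℕ) : ℕ := ∑ t, dv t

theorem off_add_lt {k : ℕ} (dv : Fin k → ℕ) (i : Fin k) (r : Fin (dv i)) :
    off dv i + (r : ℕ) < dtot dv := by
  have h1 : off dv i + dv i ≤ dtot dv := by
    have h : off dv i + dv i = ∑ t ∈ insert i (Finset.Iio i), dv t := by
      rw [Finset.sum_insert (by simp), add_comm]
      rfl
    rw [h]
    exact Finset.sum_le_sum_of_subset (Finset.subset_univ _)
  have := r.isLt
  omega

/-- The global index of the `r`-th row/column of the `i`-th block. -/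
def emb {k : ℕ} (dv : Fin k → ℕ) (i : Fin k) (r : Fin (dv i)) : Fin (dtot dv) :=
  ⟨off dv i + r, off_add_lt dv i r⟩

/-- The projection `p_{i,j}` onto the `(i,j)`-block. -/
def blk {k : ℕ} (dv : Fin k → ℕ) (i j : Fin k)
    (A : Matrix (Fin (dtot dv)) (Fin (dtot dv)) F) :
    Matrix (Fin (dv i)) (Fin (dv j)) F :=
  Matrix.of fun r s => A (emb dv i r) (emb dv j s)

/-- The `p × p` upper triangular Jordan block `J^p(α)`. -/
def Jord [Field F] (p : ℕ) (α : F) : Matrix (Fin p) (Fin p) F :=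
  Matrix.of fun a b =>
    if (b : ℕ) = (a : ℕ) then α else if (b : ℕ) = (a : ℕ) + 1 then 1 else 0

/-- The matrix whose `(i,j)` block is `M` and all other blocks vanish. -/
def embMat [Field F] {k : ℕ} (dv : Fin k → ℕ) (i j : Fin k)
    (M : Matrix (Fin (dv i)) (Fin (dv j)) F) :
    Matrix (Fin (dtot dv)) (Fin (dtot dv)) F :=
  Matrix.of fun x y => ∑ r, ∑ s, if x = emb dv i r ∧ y = emb dv j s then M r s else 0

/-- The block diagonal matrix `D(α,λ) = J^{d₁}(α) ⊕ J^{d₂}(α-λ) ⊕ ⋯ ⊕ J^{d_k}(α-(k-1)λ)`. -/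
def Dmat [Field F] {k : ℕ} (dv : Fin k → ℕ) (α lam : F) :
    Matrix (Fin (dtot dv)) (Fin (dtot dv)) F :=
  ∑ i : Fin k, embMat dv i i (Jord (dv i) (α - ((i : ℕ) : F) * lam))

/-- `A` is the matrix `E(S)` of an admissible sequence `S`:  all blocks vanish except the
blocks `p_{i,i+1}`, and each block `p_{i,i+1}` has nonzero lower-left (i.e. `(dᵢ,1)`) entry. -/
def IsEShaped [Field F] {k : ℕ} (dv : Fin k → ℕ)
    (A : Matrix (Fin (dtot dv)) (Fin (dtot dv)) F) : Prop :=
  (∀ i j : Fin k, (j : ℕ) ≠ (i : ℕ) + 1 → blk dv i j A = 0) ∧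
  (∀ i j : Fin k, (j : ℕ) = (i : ℕ) + 1 →
    ∀ (hr : dv i - 1 < dv i) (hs : 0 < dv j),
      A (emb dv i ⟨dv i - 1, hr⟩) (emb dv j ⟨0, hs⟩) ≠ 0)

/-- The matrix `E(C)` of the canonical sequence `C`. -/
def CanE (F : Type*) [Field F] {k : ℕ} (dv : Fin k → ℕ) :
    Matrix (Fin (dtot dv)) (Fin (dtot dv)) F :=
  Matrix.of fun x y =>
    if ∃ i j : Fin k, (j : ℕ) = (i : ℕ) + 1 ∧
        (x : ℕ) = off dv i + (dv i - 1) ∧ (y : ℕ) = off dv j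
    then 1 else 0

/-- The Lie subalgebra `h(α,λ,S)` of `gl(d,F)` generated by `D(α,λ)` and `E(S) = A`. -/
def hAlg (F : Type*) [Field F] {k : ℕ} (dv : Fin k → ℕ) (α lam : F)
    (A : Matrix (Fin (dtot dv)) (Fin (dtot dv)) F) :
    LieSubalgebra F (Matrix (Fin (dtot dv)) (Fin (dtot dv)) F) :=
  LieSubalgebra.lieSpan F _ {Dmat dv α lam, A}

/-- The Lie subalgebra `n(S)` generated by the matrices `(ad D(0,0))^l (E(S))`, `l ≥ 0`. -/
def nAlg (F : Type*) [Field F] {k : ℕ} (dv : Fin k → ℕ)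
    (A : Matrix (Fin (dtot dv)) (Fin (dtot dv)) F) :
    LieSubalgebra F (Matrix (Fin (dtot dv)) (Fin (dtot dv)) F) :=
  LieSubalgebra.lieSpan F _ {X | ∃ l : ℕ, X = (fun Y => ⁅Dmat dv (0 : F) 0, Y⁆)^[l] A}

/-- `r_{i,j}`:  `0` if the `(i,j)`-blocks of all members of `h(0,0,C)` vanish, and otherwise
the minimal rank of a nonzero `(i,j)`-block of a member of `h(0,0,C)`. -/
def rr (F : Type*) [Field F] {k : ℕ} (dv : Fin k → ℕ) (i j : Fin k) : ℕ :=
  if ∀ X ∈ hAlg F dv 0 0 (CanE F dv), blk dv i j X = 0 then 0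
  else sInf {n | ∃ X ∈ hAlg F dv 0 0 (CanE F dv),
    blk dv i j X ≠ 0 ∧ (blk dv i j X).rank = n}

/-- The automorphism `φ(A)_{i,j} = (−1)^{i−j+1} A_{d+1−j,d+1−i}` (here written 0-indexed). -/
def Phi (F : Type*) [Field F] (d : ℕ) (A : Matrix (Fin d) (Fin d) F) :
    Matrix (Fin d) (Fin d) F :=
  Matrix.of fun x y =>
    (-1 : F) ^ ((x : ℕ) + (y : ℕ) + 1) *
      A ⟨d - 1 - (y : ℕ), by have := y.isLt; omega⟩ ⟨d - 1 - (x : ℕ), by have := x.isLt; omega⟩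

/-- `d⃗` is symmetric: `dᵢ = d_{k+1−i}` for all `i` (0-indexed: `dᵢ = d_{k-1-i}`). -/
def SymmSeq {k : ℕ} (dv : Fin k → ℕ) : Prop :=
  ∀ i j : Fin k, (i : ℕ) + (j : ℕ) = k - 1 → dv i = dv j

/-- `d⃗` is odd-symmetric: symmetric, `k` odd and the middle `d_{(k+1)/2}` odd. -/
def OddSymmSeq {k : ℕ} (dv : Fin k → ℕ) : Prop :=
  SymmSeq dv ∧ Odd k ∧ ∀ i : Fin k, 2 * (i : ℕ) = k - 1 → Odd (dv i)

/-- Conditions (1) and (2) of Definition `Normalized` (weak normalization), expressed on the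
matrix `A = E(S)`, so that `S(i)_{a,b} = A (emb i a) (emb (i+1) b)` (0-indexed). -/
def IsWeaklyNormalized [Field F] {k : ℕ} (dv : Fin k → ℕ)
    (A : Matrix (Fin (dtot dv)) (Fin (dtot dv)) F) : Prop :=
  (∀ i j : Fin k, (j : ℕ) = (i : ℕ) + 1 →
      ∀ (hr : dv i - 1 < dv i) (hs : 0 < dv j),
        A (emb dv i ⟨dv i - 1, hr⟩) (emb dv j ⟨0, hs⟩) = 1) ∧
  (∀ i j l : Fin k, (j : ℕ) = (i : ℕ) + 1 → (l : ℕ) = (j : ℕ) + 1 →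
      ∀ (hr : dv i - 1 < dv i) (s : Fin (dv j)) (hs : dv j - 1 - (s : ℕ) < dv j)
        (h0 : 0 < dv l),
        A (emb dv i ⟨dv i - 1, hr⟩) (emb dv j s) =
          A (emb dv j ⟨dv j - 1 - (s : ℕ), hs⟩) (emb dv l ⟨0, h0⟩))

/-- The sequence `S` (given through its matrix `A = E(S)`) is normalized. -/
def IsNormalized [Field F] {k : ℕ} (dv : Fin k → ℕ)
    (A : Matrix (Fin (dtot dv)) (Fin (dtot dv)) F) : Prop :=
  IsWeaklyNormalized dv A ∧
  (∀ i j : Fin k, (i : ℕ) = 0 → (j : ℕ) = 1 →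
      ∀ (r : Fin (dv i)) (hs : 0 < dv j), (r : ℕ) ≠ dv i - 1 →
        A (emb dv i r) (emb dv j ⟨0, hs⟩) = 0) ∧
  (∀ i j : Fin k, (j : ℕ) = (i : ℕ) + 1 → (j : ℕ) = k - 1 →
      ∀ (hr : dv i - 1 < dv i) (s : Fin (dv j)), (s : ℕ) ≠ 0 →
        A (emb dv i ⟨dv i - 1, hr⟩) (emb dv j s) = 0)

/-- Membership in the group `G(d⃗)`: a block diagonal matrix each of whose diagonal blocks is
a polynomial with nonzero constant term evaluated at `J^{dᵢ}(0)`. -/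
def InG (F : Type*) [Field F] {k : ℕ} (dv : Fin k → ℕ)
    (P : Matrix (Fin (dtot dv)) (Fin (dtot dv)) F) : Prop :=
  IsUnit P ∧ ∃ q : Fin k → Polynomial F, (∀ i, (q i).coeff 0 ≠ 0) ∧
    P = ∑ i : Fin k, embMat dv i i (Polynomial.aeval (Jord (dv i) (0 : F)) (q i))

/-- The nilpotency degree of a Lie algebra: the least `m` with `L^m = 0` in the lower central
series `L^0 = L`, `L^{i+1} = [L, L^i]`. -/
def nilDeg (F : Type*) (L : Type*) [Field F] [LieRing L] [LieAlgebra F L] : ℕ :=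
  sInf {m | LieModule.lowerCentralSeries F L L m = ⊥}

/-!
On the `(i,j)`-block, `ad D(0,0)` acts as `T B = J B - B J` with `J` the nilpotent Jordan block, so
the `(i,j)`-blocks of `h(0,0,C)` form a `T`-stable space. The entry of `T^l B` at taxicab distance
`δ` from the upper right corner is an alternating binomial combination of the entries of `B` at
distance `δ + l`. Hence a rank-one block `w xᵀ`, whose farthest nonzero entry (last nonzero row of
`w`, first nonzero column of `x`) lies at distance `m`, is sent by `T^m` to a nonzero multiple of
the corner matrix. For rank two, write the block as `w₁ x₁ᵀ + w₂ x₂ᵀ` with distinct last nonzero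
rows of `w₁, w₂`. Minimality of the rank forbids nonzero corner matrices; this forces both terms to
the same distance `M` and kills the corner entry of `T^M B`, and then `T^(M-1) B` has equal entries
at `(1, d_j - 1)` and `(2, d_j)`, nonzero because `M * (M-1).choose a = (M - a) * M.choose a`
and `a₁ ≠ a₂` in characteristic zero.
-/

section NilBracket

open Finset

variable [Field F] {p q : ℕ}

def zeroExt (B : Matrix (Fin p) (Fin q) F) (a b : ℤ) : F :=
  if h : 0 ≤ a ∧ a < p ∧ 0 ≤ b ∧ b < q then B ⟨a.toNat, by omega⟩ ⟨b.toNat, by omega⟩ else 0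

@[simp]
lemma zeroExt_natCast (B : Matrix (Fin p) (Fin q) F) (r : Fin p) (s : Fin q) :
    zeroExt B (r : ℕ) (s : ℕ) = B r s := by
  rw [zeroExt, dif_pos (by omega)]
  congr

lemma zeroExt_eq_zero (B : Matrix (Fin p) (Fin q) F) {a b : ℤ}
    (h : ¬(0 ≤ a ∧ a < p ∧ 0 ≤ b ∧ b < q)) : zeroExt B a b = 0 :=
  dif_neg h

lemma Jord_zero_mul_apply (B : Matrix (Fin p) (Fin q) F) (r : Fin p) (s : Fin q) :
    (Jord p (0 : F) * B) r s = zeroExt B ((r : ℕ) + 1) s := by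
  have hJ : ∀ r' : Fin p, Jord p (0 : F) r r' = if (r' : ℕ) = r + 1 then 1 else 0 := fun r' => by
    simp only [Jord, Matrix.of_apply]; split_ifs <;> first | rfl | omega
  simp only [Matrix.mul_apply, hJ, ite_mul, one_mul, zero_mul]
  by_cases hr : (r : ℕ) + 1 < p
  · rw [Finset.sum_eq_single ⟨r + 1, hr⟩ (fun r' _ h => if_neg fun h' => h (Fin.ext h'))
      (by simp), if_pos rfl]
    exact_mod_cast (zeroExt_natCast B ⟨r + 1, hr⟩ s).symm
  · rw [zeroExt_eq_zero B (by omega)]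
    exact Finset.sum_eq_zero fun r' _ => if_neg (by omega)

lemma mul_Jord_zero_apply (B : Matrix (Fin p) (Fin q) F) (r : Fin p) (s : Fin q) :
    (B * Jord q (0 : F)) r s = zeroExt B r ((s : ℕ) - 1) := by
  have hJ : ∀ s' : Fin q, Jord q (0 : F) s' s = if (s : ℕ) = s' + 1 then 1 else 0 := fun s' => by
    simp only [Jord, Matrix.of_apply]; split_ifs <;> first | rfl | omega
  simp only [Matrix.mul_apply, hJ, mul_ite, mul_one, mul_zero]
  by_cases hs : 1 ≤ (s : ℕ)
  · rw [Finset.sum_eq_single ⟨s - 1, by omega⟩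
      (fun s' _ h => if_neg fun h' => h (Fin.ext (by simp; omega))) (by simp),
      if_pos (by simp; omega)]
    have := zeroExt_natCast B r ⟨s - 1, by omega⟩
    push_cast [Nat.cast_sub hs] at this
    exact this.symm
  · rw [zeroExt_eq_zero B (by omega)]
    exact Finset.sum_eq_zero fun s' _ => if_neg (by omega)

def nilBracket : Module.End F (Matrix (Fin p) (Fin q) F) where
  toFun B := Jord p (0 : F) * B - B * Jord q (0 : F)
  map_add' B C := by rw [Matrix.mul_add, Matrix.add_mul]; abel
  map_smul' c B := by simp [Matrix.mul_smul, Matrix.smul_mul, smul_sub]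

lemma nilBracket_apply (B : Matrix (Fin p) (Fin q) F) (r : Fin p) (s : Fin q) :
    nilBracket B r s = zeroExt B ((r : ℕ) + 1) s - zeroExt B r ((s : ℕ) - 1) := by
  rw [← Jord_zero_mul_apply, ← mul_Jord_zero_apply]
  rfl

lemma zeroExt_nilBracket (B : Matrix (Fin p) (Fin q) F) {a b : ℤ} (ha : 0 ≤ a) (hb : b < q) :
    zeroExt (nilBracket B) a b = zeroExt B (a + 1) b - zeroExt B a (b - 1) := by
  by_cases h : a < p ∧ 0 ≤ b
  · lift a to ℕ using ha
    lift b to ℕ using h.2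
    have := nilBracket_apply B ⟨a, by omega⟩ ⟨b, by omega⟩
    rw [← zeroExt_natCast (nilBracket B)] at this
    exact_mod_cast this
  · rw [zeroExt_eq_zero _ (by omega), zeroExt_eq_zero B (by omega), zeroExt_eq_zero B (by omega),
      sub_zero]

lemma zeroExt_pow_nilBracket (B : Matrix (Fin p) (Fin q) F) (l : ℕ) {a b : ℤ} (ha : 0 ≤ a)
    (hb : b < q) :
    zeroExt ((nilBracket ^ l) B) a b = ∑ ij ∈ antidiagonal l,
      (l.choose ij.1 : F) * ((-1) ^ ij.2 * zeroExt B (a + ij.1) (b - ij.2)) := by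
  induction l generalizing a b with
  | zero => simp
  | succ l ih =>
    rw [Finset.sum_antidiagonal_choose_succ_mul
      (fun i j => (-1 : F) ^ j * zeroExt B (a + i) (b - j)), pow_succ', Module.End.mul_apply,
      zeroExt_nilBracket _ ha hb, ih (by omega) hb, ih ha (by omega), sub_eq_add_neg, add_comm,
      ← Finset.sum_neg_distrib]
    congr 1 <;> refine Finset.sum_congr rfl fun ij hij => ?_
    · push_cast; ring_nf
    · rw [Nat.choose_symm_of_eq_add (mem_antidiagonal.mp hij).symm]
      push_cast; ring_nf

lemma pow_nilBracket_apply (B : Matrix (Fin p) (Fin q) F) (l : ℕ) (r : Fin p) (s : Fin q) :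
    (nilBracket ^ l) B r s = ∑ ij ∈ antidiagonal l,
      (l.choose ij.1 : F) * ((-1) ^ ij.2 * zeroExt B ((r : ℕ) + ij.1) ((s : ℕ) - ij.2)) := by
  rw [← zeroExt_natCast ((nilBracket ^ l) B), zeroExt_pow_nilBracket _ _ (by omega) (by omega)]

end NilBracket

section RankOne

open Finset Matrix

variable [Field F] {p q : ℕ}

/-- `(nilBracket ^ l) B` at distance `δ` from the upper right corner only reads entries of `B` at
distance `δ + l`. -/
def cornerDist (r : Fin p) (s : Fin q) : ℕ := r + (q - 1 - s)

def IsLastNonzero {n : ℕ} (w : Fin n → F) (a : Fin n) : Prop :=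
  w a ≠ 0 ∧ ∀ a', a < a' → w a' = 0

def IsFirstNonzero {n : ℕ} (x : Fin n → F) (b : Fin n) : Prop :=
  x b ≠ 0 ∧ ∀ b', b' < b → x b' = 0

lemma exists_isLastNonzero {n : ℕ} {w : Fin n → F} (hw : w ≠ 0) : ∃ a, IsLastNonzero w a := by
  have hs : (univ.filter fun a => w a ≠ 0).Nonempty := by
    obtain ⟨a, ha⟩ := Function.ne_iff.mp hw
    exact ⟨a, by simpa using ha⟩
  refine ⟨_, (mem_filter.mp (max'_mem _ hs)).2, fun a ha => ?_⟩
  by_contra h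
  exact (le_max' _ a (by simpa using h)).not_gt ha

lemma exists_isFirstNonzero {n : ℕ} {x : Fin n → F} (hx : x ≠ 0) : ∃ b, IsFirstNonzero x b := by
  have hs : (univ.filter fun b => x b ≠ 0).Nonempty := by
    obtain ⟨b, hb⟩ := Function.ne_iff.mp hx
    exact ⟨b, by simpa using hb⟩
  refine ⟨_, (mem_filter.mp (min'_mem _ hs)).2, fun b hb => ?_⟩
  by_contra h
  exact (min'_le _ b (by simpa using h)).not_gt hb

variable {w : Fin p → F} {x : Fin q → F} {a₀ : Fin p} {b₀ : Fin q}

lemma zeroExt_vecMulVec_eq_zero (hw : ∀ a, a₀ < a → w a = 0) (hx : ∀ b, b < b₀ → x b = 0)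
    {a b : ℤ} (h : (a₀ : ℤ) < a ∨ b < b₀) : zeroExt (vecMulVec w x) a b = 0 := by
  by_cases hab : 0 ≤ a ∧ a < p ∧ 0 ≤ b ∧ b < q
  · lift a to ℕ using hab.1
    lift b to ℕ using hab.2.2.1
    have := zeroExt_natCast (vecMulVec w x) ⟨a, by omega⟩ ⟨b, by omega⟩
    rw [this, vecMulVec_apply]
    rcases h with h | h
    · rw [hw _ (Fin.lt_def.mpr (by simp; omega)), zero_mul]
    · rw [hx _ (Fin.lt_def.mpr (by simp; omega)), mul_zero]
  · exact zeroExt_eq_zero _ hab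

lemma pow_nilBracket_vecMulVec_apply_eq_zero (hw : ∀ a, a₀ < a → w a = 0)
    (hx : ∀ b, b < b₀ → x b = 0) {l : ℕ} {r : Fin p} {s : Fin q}
    (h : cornerDist a₀ b₀ < cornerDist r s + l) :
    (nilBracket ^ l) (vecMulVec w x) r s = 0 := by
  rw [pow_nilBracket_apply]
  refine sum_eq_zero fun ij hij => ?_
  have := mem_antidiagonal.mp hij
  rw [zeroExt_vecMulVec_eq_zero hw hx (by simp only [cornerDist] at h; omega), mul_zero, mul_zero]

lemma pow_nilBracket_vecMulVec_apply_of_cornerDist_eq (hw : ∀ a, a₀ < a → w a = 0)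
    (hx : ∀ b, b < b₀ → x b = 0) {l : ℕ} {r : Fin p} {s : Fin q} (hr : (r : ℕ) = 0)
    (h : cornerDist r s + l = cornerDist a₀ b₀) :
    (nilBracket ^ l) (vecMulVec w x) r s = (-1) ^ (l + a₀) * l.choose a₀ * (w a₀ * x b₀) := by
  simp only [cornerDist] at h
  rw [pow_nilBracket_apply]
  by_cases hl : (a₀ : ℕ) ≤ l
  · have hsign : (-1 : F) ^ (l - a₀) = (-1) ^ (l + a₀) := by
      rw [show l + a₀ = l - a₀ + 2 * a₀ by omega, pow_add, pow_mul]
      simp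
    rw [Finset.sum_eq_single ((a₀ : ℕ), l - a₀)]
    · have e₁ : ((r : ℕ) : ℤ) + ((a₀ : ℕ) : ℤ) = (a₀ : ℕ) := by omega
      have e₂ : ((s : ℕ) : ℤ) - ((l - a₀ : ℕ) : ℤ) = (b₀ : ℕ) := by omega
      rw [e₁, e₂, zeroExt_natCast, vecMulVec_apply, hsign]
      ring
    · rintro ⟨i, j⟩ hij hne
      have := mem_antidiagonal.mp hij
      have hi : i ≠ a₀ := fun hi => hne (Prod.ext hi (by simp at this ⊢; omega))
      rw [zeroExt_vecMulVec_eq_zero hw hx (by simp only at this ⊢; omega), mul_zero, mul_zero]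
    · simp [hl]
  · rw [Nat.choose_eq_zero_of_lt (by omega), Nat.cast_zero, mul_zero, zero_mul]
    refine sum_eq_zero fun ij hij => ?_
    have := mem_antidiagonal.mp hij
    rw [zeroExt_vecMulVec_eq_zero hw hx (by omega), mul_zero, mul_zero]

end RankOne

section Rank

open Matrix

variable [Field F] {p q : ℕ}

lemma exists_eq_sum_vecMulVec_of_rank_eq {B : Matrix (Fin p) (Fin q) F} {n : ℕ}
    (hn : B.rank = n) :
    ∃ (u : Fin n → Fin p → F) (v : Fin n → Fin q → F), B = ∑ c, vecMulVec (u c) (v c) := by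
  let b : Module.Basis (Fin n) F (LinearMap.range B.mulVecLin) :=
    Module.finBasisOfFinrankEq F _ hn
  have hcol : ∀ s, B.col s ∈ LinearMap.range B.mulVecLin := fun s =>
    ⟨Pi.single s 1, mulVec_single_one B s⟩
  refine ⟨fun c => b c, fun c s => b.repr ⟨B.col s, hcol s⟩ c, ?_⟩
  ext a s
  have := congrArg (fun y : LinearMap.range B.mulVecLin => (y : Fin p → F) a)
    (b.sum_repr ⟨B.col s, hcol s⟩)
  simp only [Submodule.coe_sum, Submodule.coe_smul, Finset.sum_apply, Pi.smul_apply,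
    smul_eq_mul] at this
  rw [Matrix.sum_apply, ← B.col_apply, ← this]
  simp only [vecMulVec_apply, mul_comm]

lemma rank_le_one_of_forall_row_ne_zero {B : Matrix (Fin p) (Fin q) F}
    (h : ∀ (r : Fin p) s, (r : ℕ) ≠ 0 → B r s = 0) : B.rank ≤ 1 := by
  have hB : B = vecMulVec (fun r : Fin p => if (r : ℕ) = 0 then 1 else 0)
      (fun s => ∑ r, B r s) := by
    ext r s
    rw [vecMulVec_apply]
    split_ifs with hr
    · rw [one_mul, Finset.sum_eq_single r
        (fun r' _ hr' => h r' s fun h' => hr' (Fin.ext (by omega))) (by simp)]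
    · rw [zero_mul, h r s hr]
  rw [hB]
  exact rank_vecMulVec_le _ _

lemma vecMulVec_factors_ne_zero_of_rank_eq_two {B : Matrix (Fin p) (Fin q) F} {w₁ w₂ : Fin p → F}
    {x₁ x₂ : Fin q → F} (h : B.rank = 2) (hB : B = vecMulVec w₁ x₁ + vecMulVec w₂ x₂) :
    w₁ ≠ 0 ∧ x₁ ≠ 0 ∧ w₂ ≠ 0 ∧ x₂ ≠ 0 := by
  have key : ∀ w x, B ≠ vecMulVec w x := fun w x hwx => by
    have := rank_vecMulVec_le w x
    rw [← hwx] at this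
    omega
  have hz : ∀ w : Fin p → F, vecMulVec w (0 : Fin q → F) = 0 := fun w => by
    ext; simp [vecMulVec_apply]
  refine ⟨?_, ?_, ?_, ?_⟩ <;> rintro rfl
  · exact key w₂ x₂ (by simpa using hB)
  · exact key w₂ x₂ (by simpa [hz] using hB)
  · exact key w₁ x₁ (by simpa using hB)
  · exact key w₁ x₁ (by simpa [hz] using hB)

lemma exists_vecMulVec_add_of_rank_eq_two {B : Matrix (Fin p) (Fin q) F} (h : B.rank = 2) :
    ∃ (w₁ w₂ : Fin p → F) (x₁ x₂ : Fin q → F) (a₁ a₂ : Fin p),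
      B = vecMulVec w₁ x₁ + vecMulVec w₂ x₂ ∧ IsLastNonzero w₁ a₁ ∧ IsLastNonzero w₂ a₂ ∧
        a₁ ≠ a₂ := by
  obtain ⟨u, v, hB⟩ := exists_eq_sum_vecMulVec_of_rank_eq h
  rw [Fin.sum_univ_two] at hB
  obtain ⟨hu₀, -, hu₁, -⟩ := vecMulVec_factors_ne_zero_of_rank_eq_two h hB
  obtain ⟨a₁, ha₁⟩ := exists_isLastNonzero hu₀
  obtain ⟨a₂, ha₂⟩ := exists_isLastNonzero hu₁
  by_cases ha : a₁ = a₂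
  · subst ha
    set c := u 0 a₁ / u 1 a₁
    have hB' : B = vecMulVec (u 0 - c • u 1) (v 0) + vecMulVec (u 1) (v 1 + c • v 0) := by
      rw [hB, sub_vecMulVec, vecMulVec_add, smul_vecMulVec, vecMulVec_smul]
      abel
    obtain ⟨a₀, ha₀⟩ := exists_isLastNonzero (vecMulVec_factors_ne_zero_of_rank_eq_two h hB').1
    refine ⟨_, _, _, _, a₀, a₁, hB', ha₀, ha₂, fun he => ha₀.1 ?_⟩
    subst he
    simp [c, div_mul_cancel₀ _ ha₂.1]
  · exact ⟨_, _, _, _, a₁, a₂, hB, ha₁, ha₂, ha⟩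

end Rank

/-- From `(M - 1).choose a * M = M.choose a * (M - a)`: if the first combination vanishes, `M` times
the second one is `(a₂ - a₁) * M.choose a₁ * u₁`. -/
lemma choose_pred_mul_add_ne_zero {K : Type*} [Field K] [CharZero K] {M a₁ a₂ : ℕ}
    (h₁ : a₁ ≤ M) (h₂ : a₂ ≤ M) (ha : a₁ ≠ a₂) {u₁ u₂ : K} (hu₁ : u₁ ≠ 0)
    (h : (M.choose a₁ : K) * u₁ + M.choose a₂ * u₂ = 0) :
    ((M - 1).choose a₁ : K) * u₁ + (M - 1).choose a₂ * u₂ ≠ 0 := by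
  obtain ⟨m, rfl⟩ : ∃ m, M = m + 1 := ⟨M - 1, by omega⟩
  have key : ∀ a, a ≤ m + 1 → (m.choose a : K) * (m + 1) = (m + 1).choose a * (m + 1 - a) :=
    fun a ha => by
      have := congrArg (Nat.cast : ℕ → K) (Nat.choose_mul_succ_eq m a)
      push_cast [ha] at this
      exact this
  have hne : ((a₂ : K) - a₁) * (m + 1).choose a₁ * u₁ ≠ 0 :=
    mul_ne_zero (mul_ne_zero (sub_ne_zero.mpr (by exact_mod_cast ha.symm))
      (by exact_mod_cast (Nat.choose_pos h₁).ne')) hu₁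
  intro h'
  apply hne
  rw [Nat.add_sub_cancel] at h'
  linear_combination (m + 1 : K) * h' - (m + 1 - a₂ : K) * h - u₁ * key a₁ h₁ - u₂ * key a₂ h₂

section StableSubspace

open Matrix

variable [Field F] {p q : ℕ} {V : Submodule F (Matrix (Fin p) (Fin q) F)}

lemma pow_nilBracket_mem (hV : ∀ B ∈ V, nilBracket B ∈ V) {B : Matrix (Fin p) (Fin q) F}
    (hB : B ∈ V) (l : ℕ) : (nilBracket ^ l) B ∈ V := by
  induction l with
  | zero => exact hB
  | succ l ih =>
    rw [pow_succ', Module.End.mul_apply]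
    exact hV _ ih

/-- The corner entry of `nilBracket S` is `S 1 (q - 1) - S 0 (q - 2)`. -/
lemma exists_mem_of_nilBracket_corner_eq_zero (hp : 2 ≤ p) (hq : 2 ≤ q)
    {S : Matrix (Fin p) (Fin q) F} (hS : S ∈ V) (hfar : ∀ r s, 2 ≤ cornerDist r s → S r s = 0)
    (hcorner : nilBracket S ⟨0, by omega⟩ ⟨q - 1, by omega⟩ = 0)
    (hα : S ⟨0, by omega⟩ ⟨q - 2, by omega⟩ ≠ 0) :
    ∃ E ∈ V, ∀ (r : Fin p) (s : Fin q),
      ((r : ℕ) = 0 ∧ (s : ℕ) = q - 2 → E r s = 1) ∧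
      ((r : ℕ) = 1 ∧ (s : ℕ) = q - 1 → E r s = 1) ∧
      (¬((r : ℕ) = 0 ∧ (s : ℕ) = q - 2) ∧ ¬((r : ℕ) = 1 ∧ (s : ℕ) = q - 1) ∧
          ¬((r : ℕ) = 0 ∧ (s : ℕ) = q - 1) → E r s = 0) := by
  have hp₀ : 0 < p := by omega
  have hq₁ : q - 1 < q := by omega
  have hq₂ : q - 2 < q := by omega
  have h₁ : S ⟨1, hp⟩ ⟨q - 1, hq₁⟩ = S ⟨0, hp₀⟩ ⟨q - 2, hq₂⟩ := by
    rw [nilBracket_apply, sub_eq_zero] at hcorner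
    rw [← zeroExt_natCast S, ← zeroExt_natCast S]
    convert hcorner using 2 <;> simp; omega
  refine ⟨(S ⟨0, hp₀⟩ ⟨q - 2, hq₂⟩)⁻¹ • S, V.smul_mem _ hS, fun r s => ⟨?_, ?_, ?_⟩⟩
  · rintro ⟨hr, hs⟩
    obtain rfl : r = ⟨0, hp₀⟩ := Fin.ext hr
    obtain rfl : s = ⟨q - 2, hq₂⟩ := Fin.ext hs
    exact inv_mul_cancel₀ hα
  · rintro ⟨hr, hs⟩
    obtain rfl : r = ⟨1, hp⟩ := Fin.ext hr
    obtain rfl : s = ⟨q - 1, hq₁⟩ := Fin.ext hs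
    rw [Matrix.smul_apply, h₁]
    exact inv_mul_cancel₀ hα
  · rintro ⟨h₀₂, h₁₁, h₀₁⟩
    rw [Matrix.smul_apply, hfar r s (by simp only [cornerDist]; omega), smul_zero]

lemma pow_nilBracket_vecMulVec_add_eq_zero (hV : ∀ B ∈ V, nilBracket B ∈ V)
    (hrow : ∀ E ∈ V, (∀ (r : Fin p) s, (r : ℕ) ≠ 0 → E r s = 0) → E = 0)
    {w₁ w₂ : Fin p → F} {x₁ x₂ : Fin q → F} {a₁ a₂ : Fin p} {b₁ b₂ : Fin q}
    (hB : vecMulVec w₁ x₁ + vecMulVec w₂ x₂ ∈ V) (hw₁ : ∀ a, a₁ < a → w₁ a = 0)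
    (hx₁ : ∀ b, b < b₁ → x₁ b = 0) (hw₂ : ∀ a, a₂ < a → w₂ a = 0)
    (hx₂ : ∀ b, b < b₂ → x₂ b = 0) (hle : cornerDist a₁ b₁ ≤ cornerDist a₂ b₂) :
    (nilBracket ^ cornerDist a₂ b₂) (vecMulVec w₁ x₁ + vecMulVec w₂ x₂) = 0 :=
  hrow _ (pow_nilBracket_mem hV hB _) fun r s hr => by
    have : 0 < cornerDist r s := by simp only [cornerDist]; omega
    rw [map_add, Matrix.add_apply, pow_nilBracket_vecMulVec_apply_eq_zero hw₁ hx₁ (by omega),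
      pow_nilBracket_vecMulVec_apply_eq_zero hw₂ hx₂ (by omega), add_zero]

variable [CharZero F]

lemma neg_one_pow_mul_choose_mul_ne_zero {w : Fin p → F} {x : Fin q → F} {a₀ : Fin p}
    {b₀ : Fin q} (hw : IsLastNonzero w a₀) (hx : IsFirstNonzero x b₀) :
    (-1) ^ (cornerDist a₀ b₀ + a₀) * ((cornerDist a₀ b₀).choose a₀ : F) * (w a₀ * x b₀) ≠ 0 :=
  mul_ne_zero (mul_ne_zero (pow_ne_zero _ (by norm_num))
    (Nat.cast_ne_zero.mpr (Nat.choose_pos (by simp [cornerDist])).ne')) (mul_ne_zero hw.1 hx.1)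

theorem exists_corner_mem_of_rank_eq_one (hV : ∀ B ∈ V, nilBracket B ∈ V)
    {B : Matrix (Fin p) (Fin q) F} (hB : B ∈ V) (h : B.rank = 1) :
    ∃ E ∈ V, ∀ r s, E r s = if (r : ℕ) = 0 ∧ (s : ℕ) = q - 1 then 1 else 0 := by
  obtain ⟨u, v, hB'⟩ := exists_eq_sum_vecMulVec_of_rank_eq h
  rw [Fin.sum_univ_one] at hB'
  have hne : u 0 ≠ 0 ∧ v 0 ≠ 0 := by
    have hB₀ : B ≠ 0 := by
      rintro rfl
      simp at h
    constructor <;> rintro h₀ <;> exact hB₀ (by ext; simp [hB', h₀, vecMulVec_apply])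
  obtain ⟨a₀, ha₀⟩ := exists_isLastNonzero hne.1
  obtain ⟨b₀, hb₀⟩ := exists_isFirstNonzero hne.2
  set m := cornerDist a₀ b₀
  refine ⟨((-1) ^ (m + a₀) * (m.choose a₀ : F) * (u 0 a₀ * v 0 b₀))⁻¹ • (nilBracket ^ m) B,
    V.smul_mem _ (pow_nilBracket_mem hV hB m), fun r s => ?_⟩
  rw [Matrix.smul_apply, smul_eq_mul, hB']
  split_ifs with hrs
  · rw [pow_nilBracket_vecMulVec_apply_of_cornerDist_eq ha₀.2 hb₀.2 hrs.1
      (by simp [m, cornerDist, hrs]), inv_mul_cancel₀ (neg_one_pow_mul_choose_mul_ne_zero ha₀ hb₀)]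
  · rw [pow_nilBracket_vecMulVec_apply_eq_zero ha₀.2 hb₀.2 (by simp only [m, cornerDist]; omega),
      mul_zero]

lemma cornerDist_le_of_add_mem (hV : ∀ B ∈ V, nilBracket B ∈ V)
    (hrow : ∀ E ∈ V, (∀ (r : Fin p) s, (r : ℕ) ≠ 0 → E r s = 0) → E = 0)
    {w₁ w₂ : Fin p → F} {x₁ x₂ : Fin q → F} {a₁ a₂ : Fin p} {b₁ b₂ : Fin q}
    (hB : vecMulVec w₁ x₁ + vecMulVec w₂ x₂ ∈ V) (hw₁ : ∀ a, a₁ < a → w₁ a = 0)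
    (hx₁ : ∀ b, b < b₁ → x₁ b = 0) (hw₂ : IsLastNonzero w₂ a₂) (hx₂ : IsFirstNonzero x₂ b₂) :
    cornerDist a₂ b₂ ≤ cornerDist a₁ b₁ := by
  by_contra hlt
  have hcorner := congrFun₂
    (pow_nilBracket_vecMulVec_add_eq_zero hV hrow hB hw₁ hx₁ hw₂.2 hx₂.2 (by omega))
    ⟨0, a₂.pos⟩ ⟨q - 1, by have := b₂.isLt; omega⟩
  rw [map_add, Matrix.add_apply, pow_nilBracket_vecMulVec_apply_eq_zero hw₁ hx₁ (by omega),
    pow_nilBracket_vecMulVec_apply_of_cornerDist_eq hw₂.2 hx₂.2 rfl (by simp [cornerDist]),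
    zero_add] at hcorner
  exact neg_one_pow_mul_choose_mul_ne_zero hw₂ hx₂ hcorner

lemma exists_mem_of_vecMulVec_add_mem (hV : ∀ B ∈ V, nilBracket B ∈ V)
    (hrow : ∀ E ∈ V, (∀ (r : Fin p) s, (r : ℕ) ≠ 0 → E r s = 0) → E = 0)
    {w₁ w₂ : Fin p → F} {x₁ x₂ : Fin q → F} {a₁ a₂ : Fin p} {b₁ b₂ : Fin q}
    (hB : vecMulVec w₁ x₁ + vecMulVec w₂ x₂ ∈ V) (hw₁ : IsLastNonzero w₁ a₁)
    (hx₁ : IsFirstNonzero x₁ b₁) (hw₂ : IsLastNonzero w₂ a₂) (hx₂ : IsFirstNonzero x₂ b₂)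
    (ha : (a₁ : ℕ) ≠ a₂) (hM : cornerDist a₁ b₁ = cornerDist a₂ b₂) :
    ∃ E ∈ V, ∀ (r : Fin p) (s : Fin q),
      ((r : ℕ) = 0 ∧ (s : ℕ) = q - 2 → E r s = 1) ∧
      ((r : ℕ) = 1 ∧ (s : ℕ) = q - 1 → E r s = 1) ∧
      (¬((r : ℕ) = 0 ∧ (s : ℕ) = q - 2) ∧ ¬((r : ℕ) = 1 ∧ (s : ℕ) = q - 1) ∧
          ¬((r : ℕ) = 0 ∧ (s : ℕ) = q - 1) → E r s = 0) := by
  set M := cornerDist a₂ b₂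
  have := a₁.isLt; have := a₂.isLt; have := b₁.isLt; have := b₂.isLt
  have h₁M : (a₁ : ℕ) ≤ M := by simp only [M, cornerDist] at hM ⊢; omega
  have h₂M : (a₂ : ℕ) ≤ M := by simp only [M, cornerDist]; omega
  have hq : 2 ≤ q := by simp only [M, cornerDist] at hM; omega
  have hd₀ : cornerDist (⟨0, by omega⟩ : Fin p) (⟨q - 1, by omega⟩ : Fin q) = 0 := by
    simp [cornerDist]
  have hd₁ : cornerDist (⟨0, by omega⟩ : Fin p) (⟨q - 2, by omega⟩ : Fin q) = 1 := by
    simp [cornerDist]; omega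
  have hTM := pow_nilBracket_vecMulVec_add_eq_zero hV hrow hB hw₁.2 hx₁.2 hw₂.2 hx₂.2 hM.le
  have hsign : ∀ n : ℕ, (-1 : F) ^ n ≠ 0 := fun n => pow_ne_zero _ (by norm_num)
  have hcombo : (M.choose a₁ : F) * ((-1) ^ (a₁ : ℕ) * (w₁ a₁ * x₁ b₁))
      + M.choose a₂ * ((-1) ^ (a₂ : ℕ) * (w₂ a₂ * x₂ b₂)) = 0 := by
    have := congrFun₂ hTM ⟨0, by omega⟩ ⟨q - 1, by omega⟩
    rw [map_add, Matrix.add_apply,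
      pow_nilBracket_vecMulVec_apply_of_cornerDist_eq hw₁.2 hx₁.2 rfl (by rw [hd₀, hM, zero_add]),
      pow_nilBracket_vecMulVec_apply_of_cornerDist_eq hw₂.2 hx₂.2 rfl (by rw [hd₀, zero_add]),
      Matrix.zero_apply] at this
    refine (mul_eq_zero.mp (?_ : (-1 : F) ^ M * _ = 0)).resolve_left (hsign M)
    rw [← this, pow_add, pow_add]
    ring
  refine exists_mem_of_nilBracket_corner_eq_zero (by omega) hq
    (pow_nilBracket_mem hV hB (M - 1)) (fun r s hrs => ?_) ?_ ?_
  · rw [map_add, Matrix.add_apply,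
      pow_nilBracket_vecMulVec_apply_eq_zero hw₁.2 hx₁.2 (by omega),
      pow_nilBracket_vecMulVec_apply_eq_zero hw₂.2 hx₂.2 (by omega), add_zero]
  · rw [← Module.End.mul_apply, ← pow_succ', Nat.sub_add_cancel (by omega), hTM,
      Matrix.zero_apply]
  · rw [map_add, Matrix.add_apply,
      pow_nilBracket_vecMulVec_apply_of_cornerDist_eq hw₁.2 hx₁.2 rfl (by rw [hd₁, hM]; omega),
      pow_nilBracket_vecMulVec_apply_of_cornerDist_eq hw₂.2 hx₂.2 rfl (by rw [hd₁]; omega)]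
    have hne := choose_pred_mul_add_ne_zero h₁M h₂M ha
      (mul_ne_zero (hsign _) (mul_ne_zero hw₁.1 hx₁.1)) hcombo
    convert mul_ne_zero (hsign (M - 1)) hne using 1
    rw [pow_add, pow_add]
    ring

theorem exists_mem_of_rank_eq_two (hV : ∀ B ∈ V, nilBracket B ∈ V)
    (hmin : ∀ E ∈ V, E ≠ 0 → 2 ≤ E.rank) {B : Matrix (Fin p) (Fin q) F} (hB : B ∈ V)
    (h : B.rank = 2) :
    ∃ E ∈ V, ∀ (r : Fin p) (s : Fin q),
      ((r : ℕ) = 0 ∧ (s : ℕ) = q - 2 → E r s = 1) ∧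
      ((r : ℕ) = 1 ∧ (s : ℕ) = q - 1 → E r s = 1) ∧
      (¬((r : ℕ) = 0 ∧ (s : ℕ) = q - 2) ∧ ¬((r : ℕ) = 1 ∧ (s : ℕ) = q - 1) ∧
          ¬((r : ℕ) = 0 ∧ (s : ℕ) = q - 1) → E r s = 0) := by
  have hrow : ∀ E ∈ V, (∀ (r : Fin p) s, (r : ℕ) ≠ 0 → E r s = 0) → E = 0 := fun E hE hE₀ => by
    by_contra hne
    have := rank_le_one_of_forall_row_ne_zero hE₀
    have := hmin E hE hne
    omega
  obtain ⟨w₁, w₂, x₁, x₂, a₁, a₂, rfl, hw₁, hw₂, ha⟩ := exists_vecMulVec_add_of_rank_eq_two h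
  obtain ⟨-, hx₁, -, hx₂⟩ := vecMulVec_factors_ne_zero_of_rank_eq_two h rfl
  obtain ⟨b₁, hb₁⟩ := exists_isFirstNonzero hx₁
  obtain ⟨b₂, hb₂⟩ := exists_isFirstNonzero hx₂
  exact exists_mem_of_vecMulVec_add_mem hV hrow hB hw₁ hb₁ hw₂ hb₂ (Fin.val_ne_of_ne ha)
    (le_antisymm (cornerDist_le_of_add_mem hV hrow (by rwa [add_comm]) hw₂.2 hb₂.2 hw₁ hb₁)
      (cornerDist_le_of_add_mem hV hrow hB hw₁.2 hb₁.2 hw₂ hb₂))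

end StableSubspace

section Blocks

open Matrix

variable [Field F] {k : ℕ} {dv : Fin k → ℕ}

lemma off_add_le_off {t t' : Fin k} (h : t < t') : off dv t + dv t ≤ off dv t' := by
  have hsub : insert t (Finset.Iio t) ⊆ Finset.Iio t' := Finset.insert_subset
    (Finset.mem_Iio.mpr h) fun x hx => Finset.mem_Iio.mpr ((Finset.mem_Iio.mp hx).trans h)
  calc off dv t + dv t = ∑ x ∈ insert t (Finset.Iio t), dv x := by
        rw [Finset.sum_insert (by simp), add_comm]; rfl
    _ ≤ off dv t' := Finset.sum_le_sum_of_subset hsub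

lemma emb_eq_emb_iff {t t' : Fin k} {r : Fin (dv t)} {r' : Fin (dv t')} :
    emb dv t r = emb dv t' r' ↔ t = t' ∧ (r : ℕ) = r' := by
  refine ⟨fun h => ?_, fun ⟨ht, hr⟩ => ?_⟩
  · have hv : off dv t + r = off dv t' + r' := congrArg Fin.val h
    rcases lt_trichotomy t t' with hlt | rfl | hlt
    · have := off_add_le_off (dv := dv) hlt; omega
    · exact ⟨rfl, by omega⟩
    · have := off_add_le_off (dv := dv) hlt; omega
  · subst ht
    exact Fin.ext (by simp [emb, hr])

lemma Dmat_emb_left (i : Fin k) (r : Fin (dv i)) (y : Fin (dtot dv)) :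
    Dmat dv (0 : F) 0 (emb dv i r) y
      = ∑ s, if y = emb dv i s then Jord (dv i) (0 : F) r s else 0 := by
  simp only [Dmat, Matrix.sum_apply, embMat, Matrix.of_apply, emb_eq_emb_iff, mul_zero, sub_zero]
  rw [Finset.sum_eq_single i (fun t _ ht => by simp [Ne.symm ht]) (by simp),
    Finset.sum_eq_single r (fun r' _ hr' => by simp [Fin.val_ne_of_ne hr'.symm]) (by simp)]
  simp

lemma Dmat_emb_right (j : Fin k) (s : Fin (dv j)) (y : Fin (dtot dv)) :
    Dmat dv (0 : F) 0 y (emb dv j s)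
      = ∑ r, if y = emb dv j r then Jord (dv j) (0 : F) r s else 0 := by
  simp only [Dmat, Matrix.sum_apply, embMat, Matrix.of_apply, emb_eq_emb_iff, mul_zero, sub_zero]
  rw [Finset.sum_eq_single j (fun t _ ht => by simp [Ne.symm ht]) (by simp)]
  refine Finset.sum_congr rfl fun r _ => ?_
  rw [Finset.sum_eq_single s (fun s' _ hs' => by simp [Fin.val_ne_of_ne hs'.symm]) (by simp)]
  simp

lemma blk_Dmat_mul (i j : Fin k) (X : Matrix (Fin (dtot dv)) (Fin (dtot dv)) F) :
    blk dv i j (Dmat dv (0 : F) 0 * X) = Jord (dv i) (0 : F) * blk dv i j X := by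
  ext r s
  simp only [blk, Matrix.of_apply, Matrix.mul_apply, Dmat_emb_left, Finset.sum_mul, ite_mul,
    zero_mul]
  rw [Finset.sum_comm]
  simp

lemma blk_mul_Dmat (i j : Fin k) (X : Matrix (Fin (dtot dv)) (Fin (dtot dv)) F) :
    blk dv i j (X * Dmat dv (0 : F) 0) = blk dv i j X * Jord (dv j) (0 : F) := by
  ext r s
  simp only [blk, Matrix.of_apply, Matrix.mul_apply, Dmat_emb_right, Finset.mul_sum, mul_ite,
    mul_zero]
  rw [Finset.sum_comm]
  simp

lemma blk_lie_Dmat (i j : Fin k) (X : Matrix (Fin (dtot dv)) (Fin (dtot dv)) F) :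
    blk dv i j ⁅Dmat dv (0 : F) 0, X⁆ = nilBracket (blk dv i j X) := by
  rw [Ring.lie_def]
  change blk dv i j (Dmat dv 0 0 * X) - blk dv i j (X * Dmat dv 0 0) = _
  rw [blk_Dmat_mul, blk_mul_Dmat]
  rfl

end Blocks

section BlockSpace

variable [Field F] {k : ℕ} {dv : Fin k → ℕ}

def blkLinearMap (i j : Fin k) :
    Matrix (Fin (dtot dv)) (Fin (dtot dv)) F →ₗ[F] Matrix (Fin (dv i)) (Fin (dv j)) F where
  toFun := blk dv i j
  map_add' _ _ := rfl
  map_smul' _ _ := rfl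

def blockSpace (L : LieSubalgebra F (Matrix (Fin (dtot dv)) (Fin (dtot dv)) F)) (i j : Fin k) :
    Submodule F (Matrix (Fin (dv i)) (Fin (dv j)) F) :=
  L.toSubmodule.map (blkLinearMap i j)

lemma nilBracket_mem_blockSpace {L : LieSubalgebra F (Matrix (Fin (dtot dv)) (Fin (dtot dv)) F)}
    (hD : Dmat dv 0 0 ∈ L) {i j : Fin k} {B : Matrix (Fin (dv i)) (Fin (dv j)) F}
    (hB : B ∈ blockSpace L i j) : nilBracket B ∈ blockSpace L i j := by
  obtain ⟨X, hX, rfl⟩ := hB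
  exact ⟨_, L.lie_mem hD hX, blk_lie_Dmat i j X⟩

lemma rr_spec {i j : Fin k} (h : rr F dv i j ≠ 0) :
    (∃ X ∈ hAlg F dv 0 0 (CanE F dv), blk dv i j X ≠ 0 ∧ (blk dv i j X).rank = rr F dv i j) ∧
      ∀ X ∈ hAlg F dv 0 0 (CanE F dv), blk dv i j X ≠ 0 → rr F dv i j ≤ (blk dv i j X).rank := by
  unfold rr at h ⊢
  split_ifs at h ⊢ with hall
  · exact absurd rfl h
  push Not at hall
  obtain ⟨X, hX, hne⟩ := hall
  set ranks := {n | ∃ X ∈ hAlg F dv 0 0 (CanE F dv), blk dv i j X ≠ 0 ∧ (blk dv i j X).rank = n}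
  exact ⟨Nat.sInf_mem (s := ranks) ⟨_, X, hX, hne, rfl⟩,
    fun Y hY hYne => Nat.sInf_le (s := ranks) ⟨Y, hY, hYne, rfl⟩⟩

end BlockSpace

theorem statement7_general {F : Type*} [Field F] [CharZero F] {k : ℕ}
    (dv : Fin k → ℕ) (i j : Fin k) :
    (rr F dv i j = 1 →
      ∃ X ∈ hAlg F dv 0 0 (CanE F dv), ∀ (r : Fin (dv i)) (s : Fin (dv j)),
        blk dv i j X r s = if (r : ℕ) = 0 ∧ (s : ℕ) = dv j - 1 then 1 else 0) ∧
    (rr F dv i j = 2 →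
      ∃ X ∈ hAlg F dv 0 0 (CanE F dv), ∀ (r : Fin (dv i)) (s : Fin (dv j)),
        ((r : ℕ) = 0 ∧ (s : ℕ) = dv j - 2 → blk dv i j X r s = 1) ∧
        ((r : ℕ) = 1 ∧ (s : ℕ) = dv j - 1 → blk dv i j X r s = 1) ∧
        (¬((r : ℕ) = 0 ∧ (s : ℕ) = dv j - 2) ∧ ¬((r : ℕ) = 1 ∧ (s : ℕ) = dv j - 1) ∧
            ¬((r : ℕ) = 0 ∧ (s : ℕ) = dv j - 1) →
          blk dv i j X r s = 0)) := by
  have hV : ∀ B ∈ blockSpace (hAlg F dv 0 0 (CanE F dv)) i j,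
      nilBracket B ∈ blockSpace (hAlg F dv 0 0 (CanE F dv)) i j :=
    fun B => nilBracket_mem_blockSpace (LieSubalgebra.subset_lieSpan (Set.mem_insert _ _))
  refine ⟨fun h₁ => ?_, fun h₂ => ?_⟩
  · obtain ⟨⟨X, hX, -, hrank⟩, -⟩ := rr_spec (h₁ ▸ one_ne_zero)
    obtain ⟨-, ⟨Y, hY, rfl⟩, hE⟩ :=
      exists_corner_mem_of_rank_eq_one hV ⟨X, hX, rfl⟩ (hrank.trans h₁)
    exact ⟨Y, hY, hE⟩
  · obtain ⟨⟨X, hX, -, hrank⟩, hmin⟩ := rr_spec (h₂ ▸ two_ne_zero)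
    obtain ⟨-, ⟨Y, hY, rfl⟩, hE⟩ := exists_mem_of_rank_eq_two hV
      (by rintro _ ⟨Z, hZ, rfl⟩ hne; exact h₂ ▸ hmin Z hZ hne) ⟨X, hX, rfl⟩ (hrank.trans h₂)
    exact ⟨Y, hY, hE⟩

/-- Proposition `prop.dominante`:  if `r_{i,j} = 1` there is `X ∈ h(0,0,C)`
whose `(i,j)`-block has a `1` in the upper-right corner (entry `(1,d_j)`, 0-indexed
`(0, d_j−1)`) and zeros elsewhere; if `r_{i,j} = 2` there is `X ∈ h(0,0,C)` whose
`(i,j)`-block has `1`s in positions `(1,d_j−1)` and `(2,d_j)` and zeros elsewhere, except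
possibly at position `(1,d_j)`. -/
theorem statement7 {F : Type*} [Field F] [CharZero F] {k : ℕ} (hk : 2 ≤ k)
    (dv : Fin k → ℕ) (hdv : ∀ i, 0 < dv i) (i j : Fin k) (hij : i < j) :
    (rr F dv i j = 1 →
      ∃ X ∈ hAlg F dv 0 0 (CanE F dv), ∀ (r : Fin (dv i)) (s : Fin (dv j)),
        blk dv i j X r s = if (r : ℕ) = 0 ∧ (s : ℕ) = dv j - 1 then 1 else 0) ∧
    (rr F dv i j = 2 →
      ∃ X ∈ hAlg F dv 0 0 (CanE F dv), ∀ (r : Fin (dv i)) (s : Fin (dv j)),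
        ((r : ℕ) = 0 ∧ (s : ℕ) = dv j - 2 → blk dv i j X r s = 1) ∧
        ((r : ℕ) = 1 ∧ (s : ℕ) = dv j - 1 → blk dv i j X r s = 1) ∧
        (¬((r : ℕ) = 0 ∧ (s : ℕ) = dv j - 2) ∧ ¬((r : ℕ) = 1 ∧ (s : ℕ) = dv j - 1) ∧
            ¬((r : ℕ) = 0 ∧ (s : ℕ) = dv j - 1) →
          blk dv i j X r s = 0)) :=
  statement7_general dv i j

end Paper
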